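/- arXiv:2312.01312 — 2 statements merged into one kernel-verified Lean document; each statement's English description precedes it below -/
import Mathlib

section
/- Let 0 < b < 1, x₀ y₀ ≠ 0, x₀² + y₀²/b² < 1, and f(ξ) = (1 - b²) cos ξ sin ξ + x₀ sin ξ - b y₀ cos ξ. Then f has no pair of zeros ξ₁, ξ₂ ∈ [0, 2π) with ξ₂ = ξ₁ + π such that γ(ξ₁), γ(ξ₂) and the origin are collinear with the origin strictly between them, where γ(ξ) = (cos ξ + x₀, b sin ξ + y₀); in particular any two critical points of |γ| that are aligned with the origin would force x₀ y₀ = 0. -/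
open Real

/-- if `x₀ y₀ ≠ 0` and the origin is inside the ellipse
`γ ξ = (cos ξ + x₀, b sin ξ + y₀)`, then the zero set of
`f ξ = (1-b²) cos ξ sin ξ + x₀ sin ξ - b y₀ cos ξ` contains no pair `ξ₁, ξ₁ + π`
(with `ξ₁ ∈ [0,2π)`) such that `γ ξ₁`, `γ (ξ₁+π)` and the origin are collinear with
the origin strictly between them. -/
theorem stmt8 (b x₀ y₀ : ℝ) (hb : 0 < b) (hb1 : b < 1) (hxy : x₀ * y₀ ≠ 0)
    (hin : x₀ ^ 2 + y₀ ^ 2 / b ^ 2 < 1)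
    (f : ℝ → ℝ)
    (hf : f = fun ξ => (1 - b ^ 2) * Real.cos ξ * Real.sin ξ + x₀ * Real.sin ξ
      - b * y₀ * Real.cos ξ)
    (γ : ℝ → ℝ × ℝ)
    (hγ : γ = fun ξ => (Real.cos ξ + x₀, b * Real.sin ξ + y₀)) :
    ¬ ∃ ξ₁ ∈ Set.Ico (0 : ℝ) (2 * π), f ξ₁ = 0 ∧ f (ξ₁ + π) = 0 ∧
      ∃ t ∈ Set.Ioo (0 : ℝ) 1, t • γ ξ₁ + (1 - t) • γ (ξ₁ + π) = (0, 0) := by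
  rintro ⟨ξ, -, h1, h2, t, ⟨ht0, ht1⟩, heq⟩
  subst hf hγ
  simp only [Prod.smul_mk, Prod.mk_add_mk, smul_eq_mul, Prod.mk.injEq,
    Real.cos_add_pi, Real.sin_add_pi] at heq h1 h2
  obtain ⟨e1, e2⟩ := heq
  set c := Real.cos ξ with hc
  set s := Real.sin ξ with hs
  have hx : x₀ = (1 - 2*t) * c := by nlinarith [e1]
  have hy : y₀ = (1 - 2*t) * (b * s) := by nlinarith [e2]
  have hcs : c * s = 0 := by
    have hb2 : 1 - b ^ 2 > 0 := by nlinarith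
    have : c * s * ((1 - b ^ 2) * (2 * t)) = 0 := by nlinarith [h2]
    have h2t : (1 - b ^ 2) * (2 * t) ≠ 0 := by positivity
    exact (mul_eq_zero.mp this).resolve_right h2t
  apply hxy
  rw [hx, hy]
  have : (1 - 2*t) * c * ((1 - 2*t) * (b * s)) = (1 - 2*t)^2 * b * (c * s) := by ring
  rw [this, hcs, mul_zero]
end

section
/- For all b ∈ (0,1), x₀ ∈ (0, 1), μ > 0, h_I > 0: the two conditions b²/(1+x₀) - 1 < 0 and b²/(1+x₀) - 1 - (b²μ)/(2(1+x₀)²(h_I + μ/(1+x₀))) < 0 both hold, hence C₀ > 0, i.e. the homothetic trajectory through γ(0) of the reflective Kepler billiard in the ellipse γ(ξ)=(cos ξ + x₀, b sin ξ) is linearly unstable for every choice of parameters. -/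
/-- for all `b ∈ (0,1)`, `x₀ ∈ (0,1)`, `μ > 0`, `h_I > 0`, both
factors of the stability indicator `C₀` at `ξ̄ = 0` are negative, hence `C₀ > 0`:
the homothetic trajectory through `γ 0` is always linearly unstable. -/
theorem stmt19 (b x₀ μ hI : ℝ) (hb : 0 < b) (hb1 : b < 1)
    (hx0 : 0 < x₀) (hx1 : x₀ < 1) (hμ : 0 < μ) (hh : 0 < hI) :
    b ^ 2 / (1 + x₀) - 1 < 0 ∧
    b ^ 2 / (1 + x₀) - 1
      - b ^ 2 * μ / (2 * (1 + x₀) ^ 2 * (hI + μ / (1 + x₀))) < 0 ∧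
    0 < (b ^ 2 / (1 + x₀) - 1) *
      (b ^ 2 / (1 + x₀) - 1
        - b ^ 2 * μ / (2 * (1 + x₀) ^ 2 * (hI + μ / (1 + x₀)))) := by
  have h1x : (0:ℝ) < 1 + x₀ := by linarith
  have hA : b ^ 2 / (1 + x₀) - 1 < 0 := by
    have : b ^ 2 / (1 + x₀) < 1 := by
      rw [div_lt_one h1x]; nlinarith
    linarith
  have hpos : 0 < b ^ 2 * μ / (2 * (1 + x₀) ^ 2 * (hI + μ / (1 + x₀))) := by
    apply div_pos (by positivity)
    have : 0 < hI + μ / (1 + x₀) := by positivity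
    positivity
  have hB : b ^ 2 / (1 + x₀) - 1
      - b ^ 2 * μ / (2 * (1 + x₀) ^ 2 * (hI + μ / (1 + x₀))) < 0 := by linarith
  exact ⟨hA, hB, mul_pos_of_neg_of_neg hA hB⟩
end
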